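/- Let m ≡ 2 (mod 3) be an odd positive integer with 9m² + 2m square-free. The ideal class A of (2, 1+√(9m²+2m)) in Q(√(9m²+2m)) is non-principal and has order exactly 2 in the class group. -/

import Mathlib

/-!
Since `d = 9m² + 2m ≡ 3 (mod 4)`, one has `(1 + α)² - 2(1 + α) = d - 1 ≡ 2 (mod 4)`, so
`I = (2, 1 + α)` satisfies `I² = (2)`, and the class of `I` has order dividing 2. For the same
reason `𝓞 K = ℤ[α]`, so a generator of `I` would be some `a + bα` of norm `a² - d b² = ±2`
(as `N(I)² = N(2) = 4`). That equation has no solution: multiplication by the inverse of the unit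
`9m + 1 + 3α`, of norm `(9m + 1)² - 9d = 1`, strictly decreases `|b|` while `b ≠ 0`, and
`a² = ±2` is impossible.
-/

open NumberField
open scoped nonZeroDivisors

theorem Rat.exists_intCast_eq_of_sq_eq_intCast {r : ℚ} {n : ℤ} (h : r ^ 2 = n) :
    ∃ c : ℤ, (c : ℚ) = r := by
  have hden : r.den ^ 2 = 1 := by rw [← Rat.den_pow, h, Rat.den_intCast]
  exact ⟨r.num, Rat.coe_int_num_of_den_eq_one (by simpa using hden)⟩

theorem Squarefree.sq_ne_intCast {d : ℤ} (hd : Squarefree d) (hd1 : d ≠ 1) (r : ℚ) :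
    r ^ 2 ≠ d := by
  intro h
  obtain ⟨c, rfl⟩ := Rat.exists_intCast_eq_of_sq_eq_intCast h
  have hc : c ^ 2 = d := by exact_mod_cast h
  exact hd1 (hc ▸ Int.isUnit_sq (hd c ⟨1, by rw [← hc]; ring⟩))

theorem Squarefree.exists_intCast_eq_of_mul_sq_eq_intCast {d : ℤ} (hd : Squarefree d) {r : ℚ}
    {n : ℤ} (h : d * r ^ 2 = n) : ∃ s : ℤ, (s : ℚ) = r := by
  obtain ⟨c, hc⟩ := Rat.exists_intCast_eq_of_sq_eq_intCast (r := d * r) (n := d * n) (by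
    push_cast; rw [← h]; ring)
  have hc2 : c ^ 2 = d * n := by
    exact_mod_cast (show (c : ℚ) ^ 2 = d * n by rw [hc, ← h]; ring)
  obtain ⟨s, rfl⟩ := (hd.dvd_pow_iff_dvd two_ne_zero).mp ⟨n, hc2⟩
  refine ⟨s, mul_left_cancel₀ (Int.cast_ne_zero.mpr hd.ne_zero) ?_⟩
  exact_mod_cast hc

theorem Int.two_dvd_of_four_dvd_sq_sub_mul_sq {d t s : ℤ} (hd : d % 4 = 3)
    (h : 4 ∣ t ^ 2 - d * s ^ 2) : 2 ∣ t ∧ 2 ∣ s := by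
  have key : ∀ t s : ZMod 4, t ^ 2 - 3 * s ^ 2 = 0 → 2 * t = 0 ∧ 2 * s = 0 := by decide
  have hd' : (d : ZMod 4) = 3 := by
    exact_mod_cast (ZMod.intCast_eq_intCast_iff' d 3 4).mpr (by omega)
  have h' := (ZMod.intCast_zmod_eq_zero_iff_dvd _ 4).mpr h
  push_cast at h'
  rw [hd'] at h'
  obtain ⟨ht, hs⟩ := key _ _ h'
  have ht' := (ZMod.intCast_zmod_eq_zero_iff_dvd (2 * t) 4).mp (by exact_mod_cast ht)
  have hs' := (ZMod.intCast_zmod_eq_zero_iff_dvd (2 * s) 4).mp (by exact_mod_cast hs)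
  omega

theorem Squarefree.exists_intCast_eq_of_norm_eq_intCast {d : ℤ} (hd : Squarefree d)
    (hd4 : d % 4 = 3) {p q : ℚ} {n₁ n₂ : ℤ} (h₁ : p ^ 2 - d * q ^ 2 = n₁)
    (h₂ : (p + 1) ^ 2 - d * q ^ 2 = n₂) : ∃ a b : ℤ, (a : ℚ) = p ∧ (b : ℚ) = q := by
  set t : ℤ := n₂ - n₁ - 1
  have ht : (t : ℚ) = 2 * p := by push_cast [t]; linarith
  obtain ⟨s, hs⟩ := hd.exists_intCast_eq_of_mul_sq_eq_intCast (r := 2 * q) (n := t ^ 2 - 4 * n₁)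
    (by push_cast; rw [ht]; linear_combination -4 * h₁)
  obtain ⟨⟨a, ha⟩, ⟨b, rfl⟩⟩ := Int.two_dvd_of_four_dvd_sq_sub_mul_sq hd4 (t := t) (s := s)
    ⟨n₁, by exact_mod_cast (show (t : ℚ) ^ 2 - d * s ^ 2 = 4 * n₁ by
      rw [ht, hs]; linear_combination 4 * h₁)⟩
  rw [ha] at ht
  refine ⟨a, b, ?_, ?_⟩ <;> push_cast at ht hs <;> linarith

theorem Ideal.span_two_one_add_sq {R : Type*} [CommRing R] {d : ℤ} (hd : d % 4 = 3) {α : R}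
    (hα : α ^ 2 = d) : Ideal.span {2, 1 + α} ^ 2 = Ideal.span {(2 : R)} := by
  obtain ⟨k, rfl⟩ : ∃ k, d = 4 * k + 3 := ⟨d / 4, by omega⟩
  push_cast at hα
  rw [sq, Ideal.span_pair_mul_span_pair]
  apply le_antisymm
  · simp only [Ideal.span_le, Set.insert_subset_iff, Set.singleton_subset_iff, SetLike.mem_coe,
      Ideal.mem_span_singleton]
    exact ⟨⟨2, by ring⟩, ⟨1 + α, by ring⟩, ⟨1 + α, by ring⟩,
      ⟨2 * k + 2 + α, by linear_combination hα⟩⟩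
  · have h2 : (1 + α) * (1 + α) - (1 + α) * 2 - 2 * 2 * k ∈
        Ideal.span {2 * 2, 2 * (1 + α), (1 + α) * 2, (1 + α) * (1 + α)} := by
      refine Ideal.sub_mem _ (Ideal.sub_mem _ ?_ ?_) (Ideal.mul_mem_right _ _ ?_) <;>
        exact Ideal.subset_span (by simp)
    rw [show (1 + α) * (1 + α) - (1 + α) * 2 - 2 * 2 * k = 2 by linear_combination hα] at h2
    exact Ideal.span_singleton_le_iff_mem _ |>.mpr h2

theorem abs_sub_lt_of_abs_sq_sub_mul_sq_le_two {m x y : ℤ} (hm : 2 ≤ m) (hx : 0 ≤ x) (hy : 0 < y)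
    (h : |x ^ 2 - (9 * m ^ 2 + 2 * m) * y ^ 2| ≤ 2) : |(9 * m + 1) * y - 3 * x| < y := by
  obtain ⟨hlo, hhi⟩ := abs_le.mp h
  rw [abs_lt]
  constructor
  · by_contra! hc
    have := mul_self_le_mul_self (by positivity) (show (9 * m + 2) * y ≤ 3 * x by linarith)
    nlinarith
  · by_contra! hc
    have := mul_self_le_mul_self hx (show x ≤ 3 * m * y by linarith)
    nlinarith

theorem abs_sq_sub_mul_sq_ne_two {m : ℤ} (hm : 2 ≤ m) (x y : ℤ) :
    |x ^ 2 - (9 * m ^ 2 + 2 * m) * y ^ 2| ≠ 2 := by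
  induction hn : y.natAbs using Nat.strong_induction_on generalizing x y with
  | _ n ih =>
    intro h
    rw [← sq_abs x, ← sq_abs y] at h
    rw [← Int.natAbs_abs] at hn
    set X := |x|
    set Y := |y|
    have hX : 0 ≤ X := abs_nonneg x
    rcases (show 0 ≤ Y from abs_nonneg y).eq_or_lt with hY | hY
    · rw [← hY] at h
      have : X ^ 2 = 2 := by simpa using h
      rcases show X ≤ 1 ∨ 2 ≤ X by omega with hX1 | hX2 <;> nlinarith
    · -- multiplication by the unit `9m + 1 - 3√d` of norm 1
      refine ih _ ?_ ((9 * m + 1) * X - 3 * (9 * m ^ 2 + 2 * m) * Y)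
        ((9 * m + 1) * Y - 3 * X) rfl (by convert h using 2; ring)
      have := abs_sub_lt_of_abs_sq_sub_mul_sq_le_two hm hX hY h.le
      rw [← hn]
      zify
      rwa [abs_of_pos hY]

section QuadraticField

variable {K : Type*} [Field K] [CharZero K] {d : ℤ}

noncomputable def quadraticAlgEquiv (hK : Module.finrank ℚ K = 2) (hd : ∀ r : ℚ, r ^ 2 ≠ d)
    {θ : K} (hθ : θ ^ 2 = d) : QuadraticAlgebra ℚ (d : ℚ) 0 ≃ₐ[ℚ] K :=
  haveI : Fact (∀ r : ℚ, r ^ 2 ≠ d + 0 * r) := ⟨by simpa using hd⟩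
  haveI : FiniteDimensional ℚ K := Module.finite_of_finrank_eq_succ hK
  let f := QuadraticAlgebra.lift ⟨θ, by rw [← sq, hθ]; simp [Algebra.smul_def]⟩
  AlgEquiv.ofBijective f <| show Function.Bijective f from ⟨f.toRingHom.injective,
    (LinearMap.injective_iff_surjective_of_finrank_eq_finrank
      (by rw [QuadraticAlgebra.finrank_eq_two, hK]) (f := f.toLinearMap)).mp f.toRingHom.injective⟩

variable (hK : Module.finrank ℚ K = 2) (hd : ∀ r : ℚ, r ^ 2 ≠ d) {θ : K} (hθ : θ ^ 2 = d)

theorem quadraticAlgEquiv_apply (z : QuadraticAlgebra ℚ (d : ℚ) 0) :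
    quadraticAlgEquiv hK hd hθ z = z.re + z.im * θ := by
  rw [quadraticAlgEquiv, AlgEquiv.ofBijective_apply, QuadraticAlgebra.lift_apply_apply]
  simp [Algebra.smul_def]

theorem norm_quadraticAlgEquiv (z : QuadraticAlgebra ℚ (d : ℚ) 0) :
    Algebra.norm ℚ (quadraticAlgEquiv hK hd hθ z) = z.re ^ 2 - d * z.im ^ 2 := by
  rw [Algebra.norm_eq_of_algEquiv, Algebra.norm_apply]
  have : Algebra.lmul ℚ _ z = DistribSMul.toLinearMap ℚ (QuadraticAlgebra ℚ (d : ℚ) 0) z :=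
    LinearMap.ext fun _ => rfl
  rw [this, QuadraticAlgebra.det_toLinearMap_eq_norm, QuadraticAlgebra.norm_def]
  ring

end QuadraticField

namespace NumberField

variable {K : Type*} [Field K] [NumberField K] (hK : Module.finrank ℚ K = 2)

section Quadratic

variable {d : ℤ} {α : 𝓞 K} (hα : α ^ 2 = d)
include hK hα

theorem RingOfIntegers.norm_intCast_add_intCast_mul (hd : ∀ r : ℚ, r ^ 2 ≠ d) (a b : ℤ) :
    Algebra.norm ℤ ((a : 𝓞 K) + b * α) = a ^ 2 - d * b ^ 2 := by
  have hθ : (α : K) ^ 2 = d := by rw [← map_pow, hα, map_intCast]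
  have : (((a : 𝓞 K) + b * α : 𝓞 K) : K) = quadraticAlgEquiv hK hd hθ ⟨a, b⟩ := by
    rw [quadraticAlgEquiv_apply]; push_cast; rfl
  rw [← Int.cast_inj (α := ℚ), Algebra.coe_norm_int, this, norm_quadraticAlgEquiv]
  push_cast; rfl

theorem RingOfIntegers.exists_eq_intCast_add_intCast_mul (hd : Squarefree d) (hd4 : d % 4 = 3)
    (β : 𝓞 K) : ∃ a b : ℤ, β = a + b * α := by
  have hθ : (α : K) ^ 2 = d := by rw [← map_pow, hα, map_intCast]
  set e := quadraticAlgEquiv hK (hd.sq_ne_intCast (by omega)) hθ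
  have hnorm (γ : 𝓞 K) (w) (h : e w = γ) : w.re ^ 2 - d * w.im ^ 2 = Algebra.norm ℤ γ := by
    rw [Algebra.coe_norm_int, ← h, norm_quadraticAlgEquiv]
  obtain ⟨z, hz⟩ := e.surjective β
  obtain ⟨a, b, ha, hb⟩ := hd.exists_intCast_eq_of_norm_eq_intCast hd4 (hnorm β z hz)
    (by simpa [QuadraticAlgebra.re_one, QuadraticAlgebra.im_one] using
      hnorm (β + 1) (z + 1) (by simp [hz]))
  refine ⟨a, b, RingOfIntegers.ext ?_⟩
  rw [← hz, quadraticAlgEquiv_apply, ← ha, ← hb]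
  push_cast; rfl

end Quadratic

include hK in
theorem absNorm_eq_of_sq_eq_span_natCast {I : Ideal (𝓞 K)} {c : ℕ}
    (h : I ^ 2 = Ideal.span {(c : 𝓞 K)}) : Ideal.absNorm I = c := by
  apply Nat.pow_left_injective two_ne_zero
  dsimp only
  rw [← map_pow, h, Ideal.absNorm_span_singleton, ← map_natCast (algebraMap ℤ (𝓞 K)),
    Algebra.norm_algebraMap, RingOfIntegers.rank, hK]
  simp

end NumberField

theorem class_A_order_two_general (m : ℕ) (hm2 : Odd m) (hm3 : m % 3 = 2)
    (hsf : Squarefree (9 * m ^ 2 + 2 * m))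
    (K : Type) [Field K] [NumberField K]
    (hdeg : Module.finrank ℚ K = 2)
    (α : 𝓞 K) (hα : α ^ 2 = (9 * m ^ 2 + 2 * m : ℕ)) :
    ∃ hI : Ideal.span ({2, 1 + α} : Set (𝓞 K)) ∈ (Ideal (𝓞 K))⁰,
      ¬ (Ideal.span ({2, 1 + α} : Set (𝓞 K))).IsPrincipal ∧
      orderOf (ClassGroup.mk0 (⟨Ideal.span ({2, 1 + α} : Set (𝓞 K)), hI⟩ :
        (Ideal (𝓞 K))⁰)) = 2 := by
  set I := Ideal.span ({2, 1 + α} : Set (𝓞 K))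
  set d : ℤ := ((9 * m ^ 2 + 2 * m : ℕ) : ℤ)
  have hd : Squarefree d := Int.squarefree_natCast.mpr hsf
  have hd4 : d % 4 = 3 := by
    obtain ⟨j, rfl⟩ := hm2
    simp only [d]; push_cast; ring_nf; omega
  have hαd : α ^ 2 = d := by rw [hα, Int.cast_natCast]
  have hsq : I ^ 2 = Ideal.span {2} := Ideal.span_two_one_add_sq hd4 hαd
  have hnp : ¬ I.IsPrincipal := by
    rintro ⟨β, hβ⟩
    obtain ⟨a, b, rfl⟩ := RingOfIntegers.exists_eq_intCast_add_intCast_mul hdeg hαd hd hd4 β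
    have h2 := absNorm_eq_of_sq_eq_span_natCast hdeg (c := 2) (by rwa [Nat.cast_ofNat])
    rw [hβ, Ideal.submodule_span_eq, Ideal.absNorm_span_singleton,
      RingOfIntegers.norm_intCast_add_intCast_mul hdeg hαd (hd.sq_ne_intCast (by omega))] at h2
    refine abs_sq_sub_mul_sq_ne_two (m := m) (by omega) a b ?_
    rw [show (9 * (m : ℤ) ^ 2 + 2 * m) = d by push_cast [d]; ring, Int.abs_eq_natAbs, h2]
    rfl
  have hI : I ∈ (Ideal (𝓞 K))⁰ := by
    refine mem_nonZeroDivisors_of_ne_zero fun h0 => two_ne_zero (α := 𝓞 K) ?_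
    rwa [h0, zero_pow two_ne_zero, Ideal.zero_eq_bot, eq_comm, Ideal.span_singleton_eq_bot] at hsq
  refine ⟨hI, hnp, orderOf_eq_prime ?_ ?_⟩
  · rw [← map_pow, ClassGroup.mk0_eq_one_iff, SubmonoidClass.coe_pow, hsq]
    exact ⟨_, rfl⟩
  · rwa [ne_eq, ClassGroup.mk0_eq_one_iff]

theorem class_A_order_two (m : ℕ) (hm : 0 < m) (hm2 : Odd m) (hm3 : m % 3 = 2)
    (hsf : Squarefree (9 * m ^ 2 + 2 * m))
    (K : Type) [Field K] [NumberField K]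
    (hdeg : Module.finrank ℚ K = 2)
    (α : 𝓞 K) (hα : α ^ 2 = (9 * m ^ 2 + 2 * m : ℕ)) :
    ∃ hI : Ideal.span ({2, 1 + α} : Set (𝓞 K)) ∈ (Ideal (𝓞 K))⁰,
      ¬ (Ideal.span ({2, 1 + α} : Set (𝓞 K))).IsPrincipal ∧
      orderOf (ClassGroup.mk0 (⟨Ideal.span ({2, 1 + α} : Set (𝓞 K)), hI⟩ :
        (Ideal (𝓞 K))⁰)) = 2 :=
  class_A_order_two_general m hm2 hm3 hsf K hdeg α hα
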